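/- The third Boussinesq Hamiltonian operator A³, defined by A³(φ,ψ)¹ := 4σv·D_x³(φ) + 6σv₁·D_x²(φ) + 2(3σv₂ + 2uv)·D_x(φ) + 2(σv₃ + uv₁ + u₁v)·φ + 4σ·D_x³(ψ) + (4u + v²)·D_x(ψ) + 2u₁·ψ and A³(φ,ψ)² := 4σ·D_x³(φ) + (4u + v²)·D_x(φ) + 2(u₁ + vv₁)·φ + 4v·D_x(ψ) + 2v₁·ψ, is a variational bivector on the Boussinesq system: ℓ(A³(φ,ψ)) + A³(ℓ*(φ,ψ)) = (0,0) for all (φ,ψ) ∈ R². -/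
import Mathlib


/-!
STATEMENT 10: The third Boussinesq Hamiltonian operator `A³`, with components
`A³(φ,ψ)¹ := 4σv·D_x³(φ) + 6σv₁·D_x²(φ) + 2(3σv₂ + 2uv)·D_x(φ) + 2(σv₃ + uv₁ + u₁v)·φ
             + 4σ·D_x³(ψ) + (4u + v²)·D_x(ψ) + 2u₁·ψ`,
`A³(φ,ψ)² := 4σ·D_x³(φ) + (4u + v²)·D_x(φ) + 2(u₁ + vv₁)·φ + 4v·D_x(ψ) + 2v₁·ψ`,
is a variational bivector on the Boussinesq system:
`ℓ(A³(φ,ψ)) + A³(ℓ*(φ,ψ)) = (0,0)` for all `(φ,ψ) ∈ R²`.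
-/

open MvPolynomial

noncomputable section

/-- The polynomial algebra `R = ℝ[u₀,u₁,…,v₀,v₁,…]`; `X (.inl k)` is `u_k`,
`X (.inr k)` is `v_k`. -/
abbrev BRing : Type := MvPolynomial (ℕ ⊕ ℕ) ℝ

/-- The jet variable `u_k`. -/
def uu (k : ℕ) : BRing := X (Sum.inl k)

/-- The jet variable `v_k`. -/
def vv (k : ℕ) : BRing := X (Sum.inr k)

/-- The total derivative `D_x`: `D_x(u_k) = u_{k+1}`, `D_x(v_k) = v_{k+1}`. -/
def Dx : Derivation ℝ BRing BRing :=
  mkDerivation ℝ fun i =>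
    match i with
    | Sum.inl k => uu (k + 1)
    | Sum.inr k => vv (k + 1)

/-- The total derivative `D_t` of the Boussinesq system
`u_t = u₁·v + u·v₁ + σ·v₃`, `v_t = u₁ + v·v₁`. -/
def Dt (σ : ℝ) : Derivation ℝ BRing BRing :=
  mkDerivation ℝ fun i =>
    match i with
    | Sum.inl k => (⇑Dx)^[k] (uu 1 * vv 0 + uu 0 * vv 1 + C σ * vv 3)
    | Sum.inr k => (⇑Dx)^[k] (uu 1 + vv 0 * vv 1)

/-- The linearization `ℓ` of the Boussinesq system. -/
def ell (σ : ℝ) (φ ψ : BRing) : BRing × BRing :=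
  (Dt σ φ - vv 0 * Dx φ - vv 1 * φ - C σ * Dx (Dx (Dx ψ)) - uu 0 * Dx ψ - uu 1 * ψ,
   -Dx φ + Dt σ ψ - vv 0 * Dx ψ - vv 1 * ψ)

/-- The adjoint linearization `ℓ*` of the Boussinesq system. -/
def ellStar (σ : ℝ) (φ ψ : BRing) : BRing × BRing :=
  (-Dt σ φ + vv 0 * Dx φ + Dx ψ,
   C σ * Dx (Dx (Dx φ)) + uu 0 * Dx φ - Dt σ ψ + vv 0 * Dx ψ)

/-- The third Boussinesq Hamiltonian operator `A³`. -/
def A3 (σ : ℝ) (φ ψ : BRing) : BRing × BRing :=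
  (C (4 * σ) * vv 0 * Dx (Dx (Dx φ)) + C (6 * σ) * vv 1 * Dx (Dx φ)
     + 2 * (C (3 * σ) * vv 2 + 2 * uu 0 * vv 0) * Dx φ
     + 2 * (C σ * vv 3 + uu 0 * vv 1 + uu 1 * vv 0) * φ
     + C (4 * σ) * Dx (Dx (Dx ψ)) + (4 * uu 0 + vv 0 ^ 2) * Dx ψ + 2 * uu 1 * ψ,
   C (4 * σ) * Dx (Dx (Dx φ)) + (4 * uu 0 + vv 0 ^ 2) * Dx φ
     + 2 * (uu 1 + vv 0 * vv 1) * φ + 4 * vv 0 * Dx ψ + 2 * vv 1 * ψ)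

lemma Dx_u (k : ℕ) : Dx (uu k) = uu (k + 1) := by
  rw [Dx, uu, mkDerivation_X]
lemma Dx_v (k : ℕ) : Dx (vv k) = vv (k + 1) := by
  rw [Dx, vv, mkDerivation_X]
lemma Dt_u (σ : ℝ) (k : ℕ) :
    Dt σ (uu k) = (⇑Dx)^[k] (uu 1 * vv 0 + uu 0 * vv 1 + C σ * vv 3) := by
  rw [Dt, show uu k = X (Sum.inl k) from rfl, mkDerivation_X]
lemma Dt_v (σ : ℝ) (k : ℕ) :
    Dt σ (vv k) = (⇑Dx)^[k] (uu 1 + vv 0 * vv 1) := by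
  rw [Dt, show vv k = X (Sum.inr k) from rfl, mkDerivation_X]

lemma Dx_C (a : ℝ) : Dx (C a) = 0 := by
  rw [show (C a : BRing) = algebraMap ℝ BRing a from rfl, Derivation.map_algebraMap]

lemma Dt_C (σ : ℝ) (a : ℝ) : Dt σ (C a) = 0 := by
  rw [show (C a : BRing) = algebraMap ℝ BRing a from rfl, Derivation.map_algebraMap]

lemma Dx_ofNat (n : ℕ) [n.AtLeastTwo] : Dx (OfNat.ofNat n : BRing) = 0 := by
  rw [← map_ofNat (algebraMap ℝ BRing) n, Derivation.map_algebraMap]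

lemma Dt_ofNat (σ : ℝ) (n : ℕ) [n.AtLeastTwo] : Dt σ (OfNat.ofNat n : BRing) = 0 := by
  rw [← map_ofNat (algebraMap ℝ BRing) n, Derivation.map_algebraMap]

lemma Dt_Dx (σ : ℝ) (f : BRing) : Dt σ (Dx f) = Dx (Dt σ f) := by
  have h : ⁅Dt σ, Dx⁆ = 0 := by
    apply derivation_ext
    rintro (k | k) <;>
      simp only [Derivation.commutator_apply, show (X (Sum.inl k) : BRing) = uu k from rfl,
        show (X (Sum.inr k) : BRing) = vv k from rfl, Dx_u, Dx_v, Dt_u, Dt_v,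
        ← Function.iterate_succ_apply' (⇑Dx), Function.iterate_succ_apply,
        Derivation.coe_zero, Pi.zero_apply, sub_self]
  have := congrArg (fun D : Derivation ℝ BRing BRing => D f) h
  simpa [Derivation.commutator_apply, sub_eq_zero] using this


lemma Dx_one : Dx (1:BRing) = 0 := Derivation.map_one_eq_zero Dx
lemma Dt_one (σ : ℝ) : Dt σ (1:BRing) = 0 := Derivation.map_one_eq_zero (Dt σ)
lemma Dx_two : Dx (2:BRing) = 0 := Dx_ofNat 2
lemma Dx_three : Dx (3:BRing) = 0 := Dx_ofNat 3
lemma Dx_four : Dx (4:BRing) = 0 := Dx_ofNat 4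
lemma Dx_six : Dx (6:BRing) = 0 := Dx_ofNat 6
lemma Dt_two (σ : ℝ) : Dt σ (2:BRing) = 0 := Dt_ofNat σ 2
lemma Dt_three (σ : ℝ) : Dt σ (3:BRing) = 0 := Dt_ofNat σ 3
lemma Dt_four (σ : ℝ) : Dt σ (4:BRing) = 0 := Dt_ofNat σ 4
lemma Dt_six (σ : ℝ) : Dt σ (6:BRing) = 0 := Dt_ofNat σ 6


set_option maxHeartbeats 2000000 in
/-- `A³` is a variational bivector on the Boussinesq system. -/
theorem boussinesq_A3_is_variational_bivector (σ : ℝ) (φ ψ : BRing) :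
    ell σ (A3 σ φ ψ).1 (A3 σ φ ψ).2 + A3 σ (ellStar σ φ ψ).1 (ellStar σ φ ψ).2 = (0, 0) := by
  apply Prod.ext <;>
  · simp only [ell, ellStar, A3, Prod.fst, Prod.snd, Prod.mk_add_mk, map_add, map_sub, map_neg,
      Derivation.leibniz, Derivation.leibniz_pow, smul_eq_mul, nsmul_eq_mul, Dt_Dx,
      Dx_u, Dx_v, Dt_u, Dt_v, Dx_C, Dt_C, Dx_ofNat, Dt_ofNat, Dx_one, Dt_one, Dx_two, Dx_three, Dx_four, Dx_six, Dt_two, Dt_three, Dt_four, Dt_six, Function.iterate_succ_apply',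
      Function.iterate_zero_apply, Nat.cast_ofNat, Nat.cast_one, map_ofNat, C_mul, mul_zero, zero_mul,
      add_zero, zero_add, pow_one]
    ring_nf
    try simp
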